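/- arXiv:1909.13792 — 10 statements merged into one kernel-verified Lean document; each statement's English description precedes it below -/
import Mathlib

section
/- Let K be a valued field and c ∈ K. A subset B ⊆ K is a maximal ball not containing c (i.e., B is a ball with c ∉ B, and every ball strictly containing B contains c) if and only if B = {x ∈ K : rv(x - c) = ξ} for some nonzero ξ ∈ RV. -/
/- `K` is a valued field: a field with a (Krull) valuation `v : K → Γ₀ = Γ ∪ {0}`,
written multiplicatively. -/
variable {K : Type*} [Field K] {Γ₀ : Type*} [LinearOrderedCommGroupWithZero Γ₀]

/-- The relation defining the leading-term structure `RV_λ = K^×/(1+I) ∪ {0}` where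
`I = {x : |x| < λ}` : two elements are identified iff both are `0` or they differ
multiplicatively by an element of `1 + I`. -/
def rvRel (v : Valuation K Γ₀) (lam : Γ₀) (x y : K) : Prop :=
  (x = 0 ∧ y = 0) ∨ ∃ u : K, v (u - 1) < lam ∧ y = x * u

/-- The leading term map `rv_λ : K → RV_λ`, extending the projection
`K^× → K^×/(1+I)` by `0 ↦ 0`. -/
def rv (v : Valuation K Γ₀) (lam : Γ₀) (x : K) : Quot (rvRel v lam) := Quot.mk _ x

/-- A ball in the valued field `K`: an infinite proper subset `B` such that whenever
`x, x' ∈ B` and `|x - y| ≤ |x - x'|`, also `y ∈ B`. -/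
def IsBall (v : Valuation K Γ₀) (B : Set K) : Prop :=
  B.Infinite ∧ B ≠ Set.univ ∧ ∀ x ∈ B, ∀ x' ∈ B, ∀ y : K, v (x - y) ≤ v (x - x') → y ∈ B

/-!
Two nonzero elements have the same leading term iff `v (y - x) < v x`, so the fiber of `rv (· - c)`
through `a ≠ c` is the open ball of radius `v (a - c)` around `a`. As `v` is nontrivial, that ball
is infinite, so it is a ball avoiding `c`; it is maximal, since a strictly bigger ball contains a
point `x'` with `v (a - c) ≤ v (a - x')`, hence contains `c`. Conversely a ball `B` avoiding `c`
lies in the open ball of radius `v (a - c)` around any of its points `a`, for otherwise `c` would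
be in `B`; so a maximal one equals it.
-/

section

variable (v : Valuation K Γ₀)

lemma rvRel_one_iff {x y : K} : rvRel v 1 x y ↔ x = y ∨ v (y - x) < v x := by
  constructor
  · rintro (⟨rfl, rfl⟩ | ⟨u, hu, rfl⟩)
    · exact .inl rfl
    rcases eq_or_ne x 0 with rfl | hx
    · simp
    right
    calc v (x * u - x) = v x * v (u - 1) := by rw [← map_mul, mul_sub_one]
      _ < v x * 1 := mul_lt_mul_of_pos_left hu (v.pos_iff.2 hx)
      _ = v x := mul_one _
  · rintro (rfl | h)
    · exact .inr ⟨1, by simp, (mul_one x).symm⟩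
    have hx : x ≠ 0 := by rintro rfl; simp at h
    refine .inr ⟨y / x, ?_, by field_simp⟩
    rwa [div_sub_one hx, map_div₀, div_lt_one₀ (v.pos_iff.2 hx)]

lemma rvRel_one_equivalence : Equivalence (rvRel v 1) := by
  refine ⟨fun x => (rvRel_one_iff v).2 (.inl rfl), fun {x y} h => ?_, fun {x y z} hxy hyz => ?_⟩
  · rcases (rvRel_one_iff v).1 h with rfl | h
    · exact h
    rw [rvRel_one_iff, v.map_sub_swap, v.map_eq_of_sub_lt h]
    exact .inr h
  · rw [rvRel_one_iff] at hxy hyz ⊢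
    rcases hxy with rfl | hxy
    · exact hyz
    rcases hyz with rfl | hyz
    · exact .inr hxy
    rw [v.map_eq_of_sub_lt hxy] at hyz
    exact .inr (by simpa using v.map_add_lt hyz hxy)

lemma rv_one_eq_rv_one_iff {x y : K} : rv v 1 x = rv v 1 y ↔ x = y ∨ v (y - x) < v x := by
  rw [← rvRel_one_iff, ← (rvRel_one_equivalence v).eqvGen_iff]
  exact ⟨Quot.eqvGen_exact, Quot.eqvGen_sound⟩

lemma rv_one_eq_rv_one_zero_iff {x : K} : rv v 1 x = rv v 1 0 ↔ x = 0 := by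
  simp [rv_one_eq_rv_one_iff]

lemma setOf_rv_one_sub_eq {a c : K} (hac : a ≠ c) :
    {x | rv v 1 (x - c) = rv v 1 (a - c)} = {x | v (x - a) < v (a - c)} := by
  ext x
  rw [Set.mem_ofPred_eq, eq_comm, rv_one_eq_rv_one_iff, sub_sub_sub_cancel_right, sub_left_inj]
  refine ⟨?_, .inr⟩
  rintro (rfl | h)
  · simpa using v.pos_iff.2 (sub_ne_zero.2 hac)
  · exact h

lemma infinite_setOf_lt_one [v.IsNontrivial] : {x : K | v x < 1}.Infinite := by
  obtain ⟨t, ht0, ht1⟩ := Valuation.IsNontrivial.exists_lt_one (v := v)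
  refine Set.infinite_of_injective_forall_mem (f := fun n : ℕ => t ^ (n + 1)) (fun m n h => ?_)
    fun n => ?_
  · have := congrArg v h
    simp only [map_pow] at this
    exact Nat.succ_injective (pow_right_injective₀ (v.pos_iff.2 ht0) ht1.ne this)
  · simpa using pow_lt_one₀ zero_le ht1 n.succ_ne_zero

lemma infinite_setOf_sub_lt [v.IsNontrivial] (a : K) {b : K} (hb : b ≠ 0) :
    {x | v (x - a) < v b}.Infinite := by
  refine ((infinite_setOf_lt_one v).image (f := fun x => a + b * x) fun x _ y _ h => ?_).mono ?_
  · simpa [hb] using h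
  · rintro _ ⟨x, hx, rfl⟩
    show v (a + b * x - a) < v b
    rw [add_sub_cancel_left, map_mul]
    simpa using mul_lt_mul_of_pos_left hx (v.pos_iff.2 hb)

lemma isBall_setOf_sub_lt [v.IsNontrivial] (a : K) {b : K} (hb : b ≠ 0) :
    IsBall v {x | v (x - a) < v b} := by
  refine ⟨infinite_setOf_sub_lt v a hb, fun h => ?_, fun x hx x' hx' y hy => ?_⟩
  · have : a + b ∈ {x | v (x - a) < v b} := h ▸ trivial
    simp at this
  · have hxx' : v (x - x') < v b := by simpa using v.map_sub_lt hx hx'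
    simpa using v.map_sub_lt hx (hy.trans_lt hxx')

lemma subset_setOf_sub_lt_of_isBall {a c : K} {B : Set K} (hB : IsBall v B) (ha : a ∈ B)
    (hc : c ∉ B) : B ⊆ {x | v (x - a) < v (a - c)} := fun x hx => by
  by_contra h
  simp only [Set.mem_ofPred_eq, not_lt] at h
  exact hc (hB.2.2 a ha x hx c (by rwa [v.map_sub_swap a x]))

lemma mem_of_isBall_of_setOf_sub_lt_ssubset {a c : K} (hac : a ≠ c) {B : Set K}
    (hB : IsBall v B) (h : {x | v (x - a) < v (a - c)} ⊂ B) : c ∈ B := by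
  obtain ⟨x', hx'B, hx'⟩ := Set.exists_of_ssubset h
  simp only [Set.mem_ofPred_eq, not_lt] at hx'
  have ha : a ∈ B := h.subset (by simpa using v.pos_iff.2 (sub_ne_zero.2 hac))
  exact hB.2.2 a ha x' hx'B c (by rwa [v.map_sub_swap a x'])

end

/-- For a (nontrivially) valued field `K` and `c ∈ K`: a subset `B ⊆ K` is a maximal
ball not containing `c` if and only if `B` is a fiber `{x : rv(x - c) = ξ}` of a
nonzero element `ξ ∈ RV`. -/
theorem maximal_ball_avoiding_iff_rv_fiber (v : Valuation K Γ₀)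
    (hv : ∃ a : K, v a ≠ 0 ∧ v a ≠ 1) (c : K) (B : Set K) :
    (IsBall v B ∧ c ∉ B ∧ ∀ B' : Set K, IsBall v B' → B ⊂ B' → c ∈ B') ↔
      ∃ ξ : Quot (rvRel v 1), ξ ≠ rv v 1 0 ∧ B = {x : K | rv v 1 (x - c) = ξ} := by
  have : v.IsNontrivial := ⟨hv⟩
  have hc (a : K) : c ∉ {x | v (x - a) < v (a - c)} := by simp [v.map_sub_swap c a]
  constructor
  · rintro ⟨hB, hcB, hmax⟩
    obtain ⟨a, ha⟩ := hB.1.nonempty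
    have hac : a ≠ c := ne_of_mem_of_not_mem ha hcB
    refine ⟨rv v 1 (a - c), (rv_one_eq_rv_one_zero_iff v).not.2 (sub_ne_zero.2 hac), ?_⟩
    rw [setOf_rv_one_sub_eq v hac]
    refine ((subset_setOf_sub_lt_of_isBall v hB ha hcB).eq_or_ssubset).resolve_right fun hss => ?_
    exact hc a (hmax _ (isBall_setOf_sub_lt v a (sub_ne_zero.2 hac)) hss)
  · rintro ⟨ξ, hξ, rfl⟩
    obtain ⟨a, rfl⟩ : ∃ a, rv v 1 (a - c) = ξ := by
      induction ξ using Quot.ind with | mk b => exact ⟨b + c, by simp [rv]⟩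
    have hac : a ≠ c := by rintro rfl; exact hξ (by rw [sub_self])
    rw [setOf_rv_one_sub_eq v hac]
    exact ⟨isBall_setOf_sub_lt v a (sub_ne_zero.2 hac), hc a,
      fun _ => mem_of_isBall_of_setOf_sub_lt_ssubset v hac⟩
end

section
/- Let K be a valued field with valuation ring O_K and maximal ideal M_K, and let P ∈ O_K[X]. Suppose x ∈ M_K satisfies |P'(x)| = 1 and 0 < |P(x)| < 1. Set ε := −P(x)/P'(x). Then |ε| = |P(x)| and |P(x + ε)| ≤ |P(x)|². -/
/-! Over the valuation ring, `P(x + ε) = P(x) + P'(x) ε + k ε²` with `k` integral, and the Newton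
correction `ε` kills the linear part, leaving `|P(x + ε)| ≤ |ε|² = |P(x)|²`. -/

variable {K : Type*} [Field K] {Γ₀ : Type*} [LinearOrderedCommGroupWithZero Γ₀]

open Polynomial

namespace Valuation

theorem exists_map_integer_eq (v : Valuation K Γ₀) {P : K[X]} (hP : ∀ i, v (P.coeff i) ≤ 1) :
    ∃ Q : v.integer[X], Q.map v.integer.subtype = P :=
  (mem_lifts P).mp <| (lifts_iff_coeff_lifts P).mpr fun n => ⟨⟨P.coeff n, hP n⟩, rfl⟩

theorem eval_add_sub_linear_le (v : Valuation K Γ₀) {P : K[X]} (hP : ∀ i, v (P.coeff i) ≤ 1)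
    {x ε : K} (hx : v x ≤ 1) (hε : v ε ≤ 1) :
    v (P.eval (x + ε) - (P.eval x + (derivative P).eval x * ε)) ≤ v ε ^ 2 := by
  obtain ⟨Q, rfl⟩ := v.exists_map_integer_eq hP
  obtain ⟨k, hk⟩ := Q.binomExpansion ⟨x, hx⟩ ⟨ε, hε⟩
  have hremainder : (Q.map v.integer.subtype).eval (x + ε) -
      ((Q.map v.integer.subtype).eval x + (derivative (Q.map v.integer.subtype)).eval x * ε) =
      k * ε ^ 2 := by
    have hk' := congrArg v.integer.subtype hk
    simp only [map_add, map_mul, map_pow, ← eval₂_at_apply, ← eval_map, ← derivative_map] at hk'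
    exact sub_eq_iff_eq_add'.mpr hk'
  rw [hremainder, map_mul, map_pow]
  exact mul_le_of_le_one_left' k.2

end Valuation

theorem newton_step_general (v : Valuation K Γ₀) (P : Polynomial K)
    (hP : ∀ i, v (P.coeff i) ≤ 1) (x : K) (hx : v x < 1)
    (hP' : v ((Polynomial.derivative P).eval x) = 1)
    (h1 : v (P.eval x) < 1) :
    v (-(P.eval x) / (Polynomial.derivative P).eval x) = v (P.eval x) ∧
    v (P.eval (x + -(P.eval x) / (Polynomial.derivative P).eval x)) ≤
      v (P.eval x) * v (P.eval x) := by
  set ε := -(P.eval x) / (derivative P).eval x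
  have hε : v ε = v (P.eval x) := by rw [map_div₀, v.map_neg, hP', div_one]
  have hderiv : (derivative P).eval x ≠ 0 := v.ne_zero_iff.mp (hP' ▸ one_ne_zero)
  have hlinear : P.eval x + (derivative P).eval x * ε = 0 := by
    rw [mul_div_cancel₀ _ hderiv, add_neg_cancel]
  refine ⟨hε, ?_⟩
  have hremainder := v.eval_add_sub_linear_le hP hx.le (hε ▸ h1.le)
  rwa [hlinear, sub_zero, hε, sq] at hremainder

/-- Newton step: for `P ∈ O_K[X]`, `x ∈ M_K` with `|P'(x)| = 1` and `0 < |P(x)| < 1`,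
setting `ε := −P(x)/P'(x)` one has `|ε| = |P(x)|` and `|P(x + ε)| ≤ |P(x)|²`. -/
theorem newton_step (v : Valuation K Γ₀) (P : Polynomial K)
    (hP : ∀ i, v (P.coeff i) ≤ 1) (x : K) (hx : v x < 1)
    (hP' : v ((Polynomial.derivative P).eval x) = 1)
    (h0 : 0 < v (P.eval x)) (h1 : v (P.eval x) < 1) :
    v (-(P.eval x) / (Polynomial.derivative P).eval x) = v (P.eval x) ∧
    v (P.eval (x + -(P.eval x) / (Polynomial.derivative P).eval x)) ≤
      v (P.eval x) * v (P.eval x) :=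
  newton_step_general v P hP x hx hP' h1
end

section
/- Let K be a valued field, P ∈ O_K[X], and suppose |P'(x)| = 1 for all x ∈ M_K (this holds e.g. when P'(0) is a unit). Then for any x₁, x₂ ∈ M_K one has |x₁ − x₂| ≤ max(|P(x₁)|, |P(x₂)|). Consequently, the closed balls B_x := {y ∈ K : |y − x| ≤ |P(x)|} for x ∈ M_K with P(x) ≠ 0 are pairwise non-disjoint, hence form a chain under inclusion. -/
variable {K : Type*} [Field K] {Γ₀ : Type*} [LinearOrderedCommGroupWithZero Γ₀]

/-- If `P ∈ O_K[X]` satisfies `|P'(x)| = 1` for all `x ∈ M_K`, then for `x₁, x₂ ∈ M_K`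
one has `|x₁ − x₂| ≤ max(|P(x₁)|, |P(x₂)|)`; consequently the closed balls
`B_x = {y : |y − x| ≤ |P(x)|}` (for `x ∈ M_K` with `P(x) ≠ 0`) are pairwise
non-disjoint, hence form a chain under inclusion. -/
theorem newton_balls_chain (v : Valuation K Γ₀) (P : Polynomial K)
    (hP : ∀ i, v (P.coeff i) ≤ 1)
    (hP' : ∀ x : K, v x < 1 → v ((Polynomial.derivative P).eval x) = 1) :
    (∀ x₁ x₂ : K, v x₁ < 1 → v x₂ < 1 →
      v (x₁ - x₂) ≤ max (v (P.eval x₁)) (v (P.eval x₂))) ∧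
    (∀ x₁ x₂ : K, v x₁ < 1 → v x₂ < 1 → P.eval x₁ ≠ 0 → P.eval x₂ ≠ 0 →
      ({y : K | v (y - x₁) ≤ v (P.eval x₁)} ∩ {y : K | v (y - x₂) ≤ v (P.eval x₂)}).Nonempty ∧
      ({y : K | v (y - x₁) ≤ v (P.eval x₁)} ⊆ {y : K | v (y - x₂) ≤ v (P.eval x₂)} ∨
       {y : K | v (y - x₂) ≤ v (P.eval x₂)} ⊆ {y : K | v (y - x₁) ≤ v (P.eval x₁)})) := by
  have hfr : ↑P.coeffs ⊆ (v.integer : Set K) := by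
    intro c hc
    rw [Finset.mem_coe, Polynomial.mem_coeffs_iff] at hc
    obtain ⟨n, _, rfl⟩ := hc
    exact hP n
  set O := v.integer with hO
  set Q := P.toSubring O hfr with hQdef
  have hQ : Q.map O.subtype = P := Polynomial.map_toSubring P O hfr
  have push : ∀ (R : Polynomial O) (t : O), O.subtype (R.eval t) = (R.map O.subtype).eval (t : K) := by
    intro R t
    rw [Polynomial.eval_map]
    exact (Polynomial.eval₂_at_apply O.subtype t).symm
  have key : ∀ x₁ x₂ : K, v x₁ < 1 → v x₂ < 1 →
      v (x₁ - x₂) ≤ max (v (P.eval x₁)) (v (P.eval x₂)) := by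
    intro x₁ x₂ h₁ h₂
    by_cases hε0 : x₁ - x₂ = 0
    · simp [hε0]
    have hεlt : v (x₁ - x₂) < 1 := lt_of_le_of_lt (v.map_sub x₁ x₂) (max_lt h₁ h₂)
    obtain ⟨k, hk⟩ := Q.binomExpansion ⟨x₂, le_of_lt h₂⟩ ⟨x₁ - x₂, le_of_lt hεlt⟩
    have hkK := congrArg O.subtype hk
    simp only [map_add, map_mul, map_pow, push] at hkK
    rw [← Polynomial.derivative_map, hQ] at hkK
    have hkK' : P.eval (x₂ + (x₁ - x₂)) = P.eval x₂
        + (Polynomial.derivative P).eval x₂ * (x₁ - x₂) + (k : K) * (x₁ - x₂) ^ 2 := hkK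
    rw [add_sub_cancel] at hkK'
    have heq : (x₁ - x₂) * (Polynomial.derivative P).eval x₂
        = P.eval x₁ - P.eval x₂ - (k : K) * (x₁ - x₂) ^ 2 := by
      rw [hkK']; ring
    have hv : v (x₁ - x₂) = v ((x₁ - x₂) * (Polynomial.derivative P).eval x₂) := by
      rw [map_mul, hP' x₂ h₂, mul_one]
    have hεne : v (x₁ - x₂) ≠ 0 := by
      simpa using hε0
    have hk2 : v ((k : K) * (x₁ - x₂) ^ 2) < v (x₁ - x₂) := by
      rw [map_mul, map_pow]
      calc v (k : K) * v (x₁ - x₂) ^ 2 ≤ 1 * v (x₁ - x₂) ^ 2 :=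
            mul_le_mul_left k.2 _
        _ = v (x₁ - x₂) * v (x₁ - x₂) := by rw [one_mul, sq]
        _ < v (x₁ - x₂) * 1 := mul_lt_mul_of_pos_left hεlt (zero_lt_iff.mpr hεne)
        _ = v (x₁ - x₂) := mul_one _
    have : v (x₁ - x₂) ≤ max (max (v (P.eval x₁)) (v (P.eval x₂))) (v ((k : K) * (x₁ - x₂) ^ 2)) := by
      rw [hv, heq]
      exact le_trans (v.map_sub _ _) (max_le_max (v.map_sub _ _) le_rfl)
    rcases le_max_iff.mp this with h | h
    · exact h
    · exact absurd (lt_of_le_of_lt h hk2) (lt_irrefl _)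
  refine ⟨key, ?_⟩
  intro x₁ x₂ h₁ h₂ hne₁ hne₂
  have hk := key x₁ x₂ h₁ h₂
  rcases le_total (v (P.eval x₁)) (v (P.eval x₂)) with hle | hle
  · have hmax : max (v (P.eval x₁)) (v (P.eval x₂)) = v (P.eval x₂) := max_eq_right hle
    refine ⟨⟨x₁, by simp, ?_⟩, Or.inl ?_⟩
    · simpa [hmax] using hk
    · intro y hy
      simp only [Set.mem_setOf_eq] at hy ⊢
      calc v (y - x₂) = v ((y - x₁) + (x₁ - x₂)) := by ring_nf
        _ ≤ max (v (y - x₁)) (v (x₁ - x₂)) := v.map_add _ _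
        _ ≤ v (P.eval x₂) := max_le (le_trans hy hle) (by simpa [hmax] using hk)
  · have hmax : max (v (P.eval x₁)) (v (P.eval x₂)) = v (P.eval x₁) := max_eq_left hle
    refine ⟨⟨x₂, ?_, by simp⟩, Or.inr ?_⟩
    · simpa [hmax, v.map_sub_swap] using hk
    · intro y hy
      simp only [Set.mem_setOf_eq] at hy ⊢
      calc v (y - x₁) = v ((y - x₂) + (x₂ - x₁)) := by ring_nf
        _ ≤ max (v (y - x₂)) (v (x₂ - x₁)) := v.map_add _ _
        _ ≤ v (P.eval x₁) := max_le (le_trans hy hle) (by simpa [hmax, v.map_sub_swap] using hk)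
end

section
/- Let K be a spherically complete valued field (every chain of balls, ordered by inclusion, has non-empty intersection). Then K satisfies Hensel's lemma: for every polynomial P ∈ O_K[X] with |P(0)| < 1 and |P'(0)| = 1, there exists a ∈ M_K with P(a) = 0. -/
variable {K : Type*} [Field K] {Γ₀ : Type*} [LinearOrderedCommGroupWithZero Γ₀]

/-!
Let `a ∈ M_K`. Since `|P'(a)| = 1`, Taylor expansion gives `|P(c)| ≤ |P(a)|` on the closed ball
`B(a, |P(a)|)`, so `B(c, |P(c)|) ⊆ B(a, |P(a)|)` for every `c` in it. Spherical completeness and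
Zorn's lemma give a minimal such ball `B(a, |P(a)|)`. If `P(a) ≠ 0`, the Newton iterate
`b = a - P(a)/P'(a)` lies on that ball with `|P(b)| ≤ |P(a)|² < |P(a)|`, so `a ∉ B(b, |P(b)|)`
and `B(b, |P(b)|)` is strictly smaller.
-/

open Polynomial

namespace Valuation

section Polynomial

variable {R : Type*} [CommRing R] (v : Valuation R Γ₀)

theorem map_eval_le_one {P : R[X]} (hP : ∀ i, v (P.coeff i) ≤ 1) {x : R} (hx : v x ≤ 1) :
    v (P.eval x) ≤ 1 := by
  rw [eval_eq_sum_range]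
  refine v.map_sum_le fun i _ => ?_
  rw [v.map_mul, v.map_pow]
  exact mul_le_one' (hP i) (pow_le_one' hx i)

theorem map_coeff_derivative_le_one {P : R[X]} (hP : ∀ i, v (P.coeff i) ≤ 1) (n : ℕ) :
    v (P.derivative.coeff n) ≤ 1 := by
  rw [coeff_derivative, v.map_mul]
  exact mul_le_one' (hP _) (v.integer.add_mem (natCast_mem v.integer n) v.integer.one_mem)

theorem map_coeff_taylor_le_one {P : R[X]} (hP : ∀ i, v (P.coeff i) ≤ 1) {a : R} (ha : v a ≤ 1)
    (n : ℕ) : v ((taylor a P).coeff n) ≤ 1 := by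
  rw [taylor_coeff]
  refine v.map_eval_le_one (fun i => ?_) ha
  rw [hasseDeriv_coeff, v.map_mul]
  exact mul_le_one' (natCast_mem v.integer _) (hP _)

theorem map_eval_sub_sum_le_pow {T : R[X]} (hT : ∀ i, v (T.coeff i) ≤ 1) {t : R} (ht : v t ≤ 1)
    (n : ℕ) : v (T.eval t - ∑ i ∈ Finset.range n, T.coeff i * t ^ i) ≤ v t ^ n := by
  induction n generalizing T with
  | zero => simpa using v.map_eval_le_one hT ht
  | succ n ih =>
    have heval : T.eval t = t * T.divX.eval t + T.coeff 0 := by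
      conv_lhs => rw [← divX_mul_X_add T]
      simp only [eval_add, eval_mul, eval_X, eval_C, mul_comm]
    have hsplit : T.eval t - ∑ i ∈ Finset.range (n + 1), T.coeff i * t ^ i =
        t * (T.divX.eval t - ∑ i ∈ Finset.range n, T.divX.coeff i * t ^ i) := by
      have hterm (i : ℕ) : T.coeff (i + 1) * t ^ (i + 1) = t * (T.divX.coeff i * t ^ i) := by
        rw [coeff_divX]; ring
      rw [heval, Finset.sum_range_succ', pow_zero, mul_one, mul_sub, Finset.mul_sum]
      simp only [hterm]
      ring
    rw [hsplit, v.map_mul, pow_succ']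
    exact mul_le_mul_right (ih fun i => by rw [coeff_divX]; exact hT _) _

theorem map_eval_add_sub_eval_le {P : R[X]} (hP : ∀ i, v (P.coeff i) ≤ 1) {a t : R}
    (ha : v a ≤ 1) (ht : v t ≤ 1) : v (P.eval (a + t) - P.eval a) ≤ v t := by
  simpa [taylor_eval, add_comm t a] using
    v.map_eval_sub_sum_le_pow (v.map_coeff_taylor_le_one hP ha) ht 1

theorem map_eval_add_sub_linear_le {P : R[X]} (hP : ∀ i, v (P.coeff i) ≤ 1) {a t : R}
    (ha : v a ≤ 1) (ht : v t ≤ 1) :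
    v (P.eval (a + t) - P.eval a - P.derivative.eval a * t) ≤ v t ^ 2 := by
  simpa [taylor_eval, add_comm t a, Finset.sum_range_succ, taylor_coeff_one, sub_sub] using
    v.map_eval_sub_sum_le_pow (v.map_coeff_taylor_le_one hP ha) ht 2

theorem map_derivative_eval_eq_one {P : R[X]} (hP : ∀ i, v (P.coeff i) ≤ 1)
    (h1 : v (P.derivative.eval 0) = 1) {a : R} (ha : v a < 1) :
    v (P.derivative.eval a) = 1 := by
  have hdiff := v.map_eval_add_sub_eval_le (v.map_coeff_derivative_le_one hP) (a := 0)
    (by simp) ha.le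
  rw [zero_add] at hdiff
  rw [← h1]
  exact v.map_eq_of_sub_lt (h1 ▸ hdiff.trans_lt ha)

theorem map_eval_lt_one {P : R[X]} (hP : ∀ i, v (P.coeff i) ≤ 1) (h0 : v (P.eval 0) < 1)
    {a : R} (ha : v a < 1) : v (P.eval a) < 1 := by
  have hdiff := v.map_eval_add_sub_eval_le hP (a := 0) (by simp) ha.le
  rw [zero_add] at hdiff
  simpa using v.map_add_lt (hdiff.trans_lt ha) h0

theorem map_eval_le_of_map_sub_le {P : R[X]} (hP : ∀ i, v (P.coeff i) ≤ 1)
    (h0 : v (P.eval 0) < 1) {a c : R} (ha : v a < 1) (hc : v (c - a) ≤ v (P.eval a)) :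
    v (P.eval c) ≤ v (P.eval a) := by
  have hca : v (c - a) ≤ 1 := hc.trans (v.map_eval_lt_one hP h0 ha).le
  have hrem := v.map_eval_add_sub_linear_le hP ha.le hca
  rw [add_sub_cancel] at hrem
  have hsq : v (c - a) ^ 2 ≤ v (c - a) := by
    rw [sq]; exact mul_le_of_le_one_right' hca
  have hlin : v (P.derivative.eval a * (c - a)) ≤ v (P.eval a) := by
    rw [v.map_mul]
    exact (mul_le_of_le_one_left' <|
      v.map_eval_le_one (v.map_coeff_derivative_le_one hP) ha.le).trans hc
  have hsplit : P.eval c = (P.eval c - P.eval a - P.derivative.eval a * (c - a)) + P.eval a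
      + P.derivative.eval a * (c - a) := by ring
  rw [hsplit]
  exact v.map_add_le (v.map_add_le ((hrem.trans hsq).trans hc) le_rfl) hlin

end Polynomial

section SphericallyComplete

variable {R : Type*} [Ring R]

def IsSphericallyComplete (v : Valuation R Γ₀) : Prop :=
  ∀ 𝒞 : Set (Set R), 𝒞.Nonempty →
    (∀ B ∈ 𝒞, ∃ (a : R) (γ : Γ₀), γ ≠ 0 ∧
      (B = {y : R | v (y - a) < γ} ∨ B = {y : R | v (y - a) ≤ γ})) →
    IsChain (· ⊆ ·) 𝒞 → (⋂₀ 𝒞).Nonempty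

/-- Zorn's lemma on the balls `{y | v (y - a) ≤ r a}`, `a ∈ U`: the conclusion says that the ball
around `a` is minimal among them. -/
theorem IsSphericallyComplete.exists_forall_map_sub_le {v : Valuation R Γ₀}
    (hv : v.IsSphericallyComplete) {U : Set R} (hU : U.Nonempty) {r : R → Γ₀}
    (hr : ∀ a ∈ U, r a ≠ 0) (hstable : ∀ a ∈ U, ∀ c, v (c - a) ≤ r a → c ∈ U ∧ r c ≤ r a) :
    ∃ a ∈ U, ∀ c, v (c - a) ≤ r a → v (a - c) ≤ r c := by
  set ball : R → Set R := fun a => {y | v (y - a) ≤ r a}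
  have ball_subset {a c : R} (ha : a ∈ U) (hc : v (c - a) ≤ r a) : ball c ⊆ ball a :=
    fun z hz => show v (z - a) ≤ r a by
      simpa using v.map_add_le (hz.trans (hstable a ha c hc).2) hc
  have hchain : ∀ 𝒞 ⊆ ball '' U, IsChain (· ⊆ ·) 𝒞 → ∃ B ∈ ball '' U, ∀ B' ∈ 𝒞, B ⊆ B' := by
    intro 𝒞 h𝒞 hchain
    obtain rfl | hne := 𝒞.eq_empty_or_nonempty
    · obtain ⟨a, ha⟩ := hU
      exact ⟨ball a, ⟨a, ha, rfl⟩, by simp⟩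
    obtain ⟨x, hx⟩ := hv 𝒞 hne (fun B hB => by
      obtain ⟨a, ha, rfl⟩ := h𝒞 hB
      exact ⟨a, r a, hr a ha, Or.inr rfl⟩) hchain
    obtain ⟨B₀, hB₀⟩ := hne
    obtain ⟨a₀, ha₀, rfl⟩ := h𝒞 hB₀
    refine ⟨ball x, ⟨x, (hstable a₀ ha₀ x (hx _ hB₀)).1, rfl⟩, fun B hB => ?_⟩
    obtain ⟨a, ha, rfl⟩ := h𝒞 hB
    exact ball_subset ha (hx _ hB)
  obtain ⟨_, ⟨a, ha, rfl⟩, hmin⟩ := zorn_superset (ball '' U) hchain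
  refine ⟨a, ha, fun c hc => ?_⟩
  exact hmin ⟨c, (hstable a ha c hc).1, rfl⟩ (ball_subset ha hc) (show a ∈ ball a by simp [ball])

end SphericallyComplete

theorem exists_map_sub_eq_map_eval_lt {v : Valuation K Γ₀} {P : K[X]}
    (hP : ∀ i, v (P.coeff i) ≤ 1) (h0 : v (P.eval 0) < 1) (h1 : v (P.derivative.eval 0) = 1)
    {a : K} (ha : v a < 1) (hPa : P.eval a ≠ 0) :
    ∃ b, v (a - b) = v (P.eval a) ∧ v (P.eval b) < v (P.eval a) := by
  have hd := v.map_derivative_eval_eq_one hP h1 ha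
  have hd0 : P.derivative.eval a ≠ 0 := v.ne_zero_iff.1 (by simp [hd])
  set t := -(P.eval a / P.derivative.eval a)
  have ht : v t = v (P.eval a) := by simp [t, hd]
  have hPa1 := v.map_eval_lt_one hP h0 ha
  have hrem := v.map_eval_add_sub_linear_le hP ha.le (ht ▸ hPa1.le)
  have hnewton : P.eval a + P.derivative.eval a * t = 0 := by
    rw [mul_neg, mul_div_cancel₀ _ hd0, add_neg_cancel]
  rw [sub_sub, hnewton, sub_zero, ht] at hrem
  exact ⟨a + t, by simpa using ht,
    hrem.trans_lt (pow_lt_self_of_lt_one₀ (zero_lt_iff.2 (v.ne_zero_iff.2 hPa)) hPa1 one_lt_two)⟩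

end Valuation

/-- A spherically complete valued field (every chain of balls has nonempty
intersection) satisfies Hensel's lemma: any `P ∈ O_K[X]` with `|P(0)| < 1` and
`|P'(0)| = 1` has a root in the maximal ideal `M_K`. -/
theorem spherically_complete_henselian (v : Valuation K Γ₀)
    (hsc : ∀ 𝒞 : Set (Set K), 𝒞.Nonempty →
      (∀ B ∈ 𝒞, ∃ (a : K) (γ : Γ₀), γ ≠ 0 ∧
        (B = {y : K | v (y - a) < γ} ∨ B = {y : K | v (y - a) ≤ γ})) →
      IsChain (· ⊆ ·) 𝒞 → (⋂₀ 𝒞).Nonempty)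
    (P : Polynomial K) (hP : ∀ i, v (P.coeff i) ≤ 1)
    (h0 : v (P.eval 0) < 1) (h1 : v ((Polynomial.derivative P).eval 0) = 1) :
    ∃ a : K, v a < 1 ∧ P.eval a = 0 := by
  by_contra! hroot
  have hsc : v.IsSphericallyComplete := hsc
  have hstable (a : K) (ha : v a < 1) (c : K) (hc : v (c - a) ≤ v (P.eval a)) :
      v c < 1 ∧ v (P.eval c) ≤ v (P.eval a) :=
    ⟨by simpa using v.map_add_lt (hc.trans_lt (v.map_eval_lt_one hP h0 ha)) ha,
      v.map_eval_le_of_map_sub_le hP h0 ha hc⟩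
  obtain ⟨a, ha, hmin⟩ := hsc.exists_forall_map_sub_le (U := {a | v a < 1})
    (r := fun a => v (P.eval a)) ⟨0, by simp⟩ (fun a ha => v.ne_zero_iff.2 (hroot a ha)) hstable
  obtain ⟨b, hab, hb⟩ := v.exists_map_sub_eq_map_eval_lt hP h0 h1 ha (hroot a ha)
  exact (hmin b (by rw [v.map_sub_swap, hab])).not_gt (hab ▸ hb)
end

section
/- Let K be a valued field of residue characteristic 0, let C ⊆ K be a finite set with at least 2 elements, and let a := (1/|C|)·∑_{x ∈ C} x be the average of its elements. Then the map x ↦ rv(x − a) is not constant on C; i.e., there exist x, x' ∈ C with rv(x − a) ≠ rv(x' − a). -/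
/- `K` is a valued field: a field with a (Krull) valuation `v : K → Γ₀ = Γ ∪ {0}`,
written multiplicatively. -/
variable {K : Type*} [Field K] {Γ₀ : Type*} [LinearOrderedCommGroupWithZero Γ₀]

lemma val_eq_one_of_sub_one_lt (v : Valuation K Γ₀) {u : K} (h : v (u - 1) < 1) :
    v u = 1 := by
  have := v.map_one_add_of_lt h
  simpa [add_sub_cancel] using this

lemma rvRel_one_equiv (v : Valuation K Γ₀) : Equivalence (rvRel v 1) := by
  constructor
  · intro x
    exact Or.inr ⟨1, by simp [zero_lt_one], by ring⟩
  · rintro x y (⟨hx, hy⟩ | ⟨u, hu, hy⟩)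
    · exact Or.inl ⟨hy, hx⟩
    · have hu1 : v u = 1 := val_eq_one_of_sub_one_lt v hu
      have hune : u ≠ 0 := by
        intro h; rw [h, map_zero] at hu1; exact zero_ne_one hu1
      refine Or.inr ⟨u⁻¹, ?_, by field_simp [hy]; exact hy.symm⟩
      have : u⁻¹ - 1 = u⁻¹ * (1 - u) := by field_simp
      rw [this, map_mul, map_inv₀, hu1]
      simpa [← v.map_neg (1 - u), neg_sub] using hu
  · rintro x y z (⟨hx, hy⟩ | ⟨u, hu, hy⟩) (⟨hy', hz⟩ | ⟨w, hw, hz⟩)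
    · exact Or.inl ⟨hx, hz⟩
    · exact Or.inr ⟨w, hw, by subst hx hy; simpa using hz⟩
    · refine Or.inl ⟨?_, hz⟩
      by_contra hx0
      have hu1 : v u = 1 := val_eq_one_of_sub_one_lt v hu
      have : u ≠ 0 := by intro h; rw [h, map_zero] at hu1; exact zero_ne_one hu1
      exact (mul_ne_zero hx0 this) (hy ▸ hy')
    · refine Or.inr ⟨u * w, ?_, by rw [hz, hy]; ring⟩
      have hu1 : v u = 1 := val_eq_one_of_sub_one_lt v hu
      have : u * w - 1 = u * (w - 1) + (u - 1) := by ring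
      rw [this]
      calc v (u * (w - 1) + (u - 1)) ≤ max (v (u * (w - 1))) (v (u - 1)) := v.map_add _ _
        _ < 1 := max_lt (by rw [map_mul, hu1, one_mul]; exact hw) hu

lemma rv_one_eq_imp (v : Valuation K Γ₀) {x y : K} (h : rv v 1 x = rv v 1 y) :
    rvRel v 1 x y :=
  (rvRel_one_equiv v).eqvGen_iff.mp (Quot.eqvGen_exact h)

/-- In a valued field of equicharacteristic 0 (residue characteristic 0 encoded:
every nonzero natural number has valuation 1), for a finite set `C ⊆ K` with at
least 2 elements and `a` its average, the map `x ↦ rv(x − a)` is not constant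
on `C`. -/
theorem rv_not_constant_around_average (v : Valuation K Γ₀)
    (hres : ∀ n : ℕ, n ≠ 0 → v (n : K) = 1)
    (C : Finset K) (hC : 2 ≤ C.card) :
    ∃ x ∈ C, ∃ x' ∈ C,
      rv v 1 (x - (C.card : K)⁻¹ * ∑ y ∈ C, y) ≠
        rv v 1 (x' - (C.card : K)⁻¹ * ∑ y ∈ C, y) := by
  by_contra hcon
  push_neg at hcon
  set a : K := (C.card : K)⁻¹ * ∑ y ∈ C, y with ha
  -- card ≠ 0 in K
  have hcard0 : C.card ≠ 0 := by omega
  have hcardK : (C.card : K) ≠ 0 := by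
    intro h
    have := hres C.card hcard0
    rw [h, map_zero] at this
    exact zero_ne_one this
  -- sum of (x - a) over C is 0
  have hsum0 : ∑ x ∈ C, (x - a) = 0 := by
    rw [Finset.sum_sub_distrib, Finset.sum_const, nsmul_eq_mul, ha]
    field_simp
    simp
  -- there are two distinct elements, so some x₁ with x₁ - a ≠ 0
  obtain ⟨x₁, hx₁, x₂, hx₂, hne⟩ := Finset.one_lt_card.mp hC
  have hx1a : x₁ - a ≠ 0 ∨ x₂ - a ≠ 0 := by
    by_contra h
    push_neg at h
    exact hne (by linear_combination h.1 - h.2)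
  -- wlog pick z ∈ C with z - a ≠ 0
  obtain ⟨z, hz, hza⟩ : ∃ z ∈ C, z - a ≠ 0 := by
    rcases hx1a with h | h
    · exact ⟨x₁, hx₁, h⟩
    · exact ⟨x₂, hx₂, h⟩
  -- for every x ∈ C, get u with x - a = (z - a) * u
  have hrel : ∀ x ∈ C, ∃ u : K, v (u - 1) < 1 ∧ x - a = (z - a) * u := by
    intro x hx
    rcases rv_one_eq_imp v (hcon z hz x hx) with ⟨h0, _⟩ | ⟨u, hu, hxu⟩
    · exact absurd h0 hza
    · exact ⟨u, hu, hxu⟩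
  classical
  choose! u hu hxa using hrel
  -- sum of u over C is 0
  have hsumu : ∑ x ∈ C, u x = 0 := by
    have : ∑ x ∈ C, (x - a) = (z - a) * ∑ x ∈ C, u x := by
      rw [Finset.mul_sum]
      exact Finset.sum_congr rfl fun x hx => hxa x hx
    rw [hsum0] at this
    exact (mul_eq_zero.mp this.symm).resolve_left hza
  -- ∑ (u x - 1) = - card
  have hsum1 : ∑ x ∈ C, (u x - 1) = -(C.card : K) := by
    rw [Finset.sum_sub_distrib, hsumu, Finset.sum_const, nsmul_eq_mul, mul_one]
    ring
  have hlt : v (∑ x ∈ C, (u x - 1)) < 1 :=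
    v.map_sum_lt one_ne_zero fun x hx => hu x hx
  rw [hsum1, v.map_neg, hres C.card hcard0] at hlt
  exact lt_irrefl _ hlt
end

section
/- Let K be a valued field of residue characteristic 0, let λ ≤ 1 be in the value group, and let r₁, r₂, s₁, s₂ ∈ K with r₁, r₂ ≠ 0, rv(r₁) = rv(r₂), and |s₂/r₂ − s₁/r₁| < λ·|s₁/r₁|. Then r₁ + r₂ ≠ 0 and |(s₁+s₂)/(r₁+r₂) − s₁/r₁| < λ·|s₁/r₁|. (In terms of difference quotients: if two consecutive difference quotients of a function have the same rv_λ-class and the increments have the same rv-class, then so does the combined difference quotient.) -/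
/- `K` is a valued field: a field with a (Krull) valuation `v : K → Γ₀ = Γ ∪ {0}`,
written multiplicatively. -/
variable {K : Type*} [Field K] {Γ₀ : Type*} [LinearOrderedCommGroupWithZero Γ₀]

private lemma rv_extract (v : Valuation K Γ₀) {x y : K} (h : rv v 1 x = rv v 1 y) :
    (x = 0 ∧ y = 0) ∨ (x ≠ 0 ∧ y ≠ 0 ∧ v (y / x - 1) < 1) := by
  have h' := Quot.eqvGen_exact h
  clear h
  induction h' with
  | rel a b hab =>
    rcases hab with ⟨ha, hb⟩ | ⟨u, hu, rfl⟩
    · exact Or.inl ⟨ha, hb⟩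
    · rcases eq_or_ne a 0 with rfl | ha
      · exact Or.inl ⟨rfl, by ring⟩
      · have hvu : v u = 1 := by
          have := v.map_one_add_of_lt (x := u - 1) hu
          simpa using this
        have hu0 : u ≠ 0 := by
          intro h0; rw [h0] at hvu; simp at hvu
        refine Or.inr ⟨ha, mul_ne_zero ha hu0, ?_⟩
        rw [mul_div_cancel_left₀ u ha]
        exact hu
  | refl a =>
    rcases eq_or_ne a 0 with rfl | ha
    · exact Or.inl ⟨rfl, rfl⟩
    · refine Or.inr ⟨ha, ha, ?_⟩
      rw [div_self ha]; simpa using zero_lt_one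
  | symm a b _ ih =>
    rcases ih with ⟨ha, hb⟩ | ⟨ha, hb, hv⟩
    · exact Or.inl ⟨hb, ha⟩
    · refine Or.inr ⟨hb, ha, ?_⟩
      have hvab : v b = v a := by
        have : v (b - a) < v a := by
          have := hv
          rwa [div_sub_one ha, map_div₀, div_lt_iff₀ (v.pos_iff.2 ha), one_mul] at this
        exact v.map_eq_of_sub_lt this
      rw [div_sub_one hb, map_div₀, hvab, div_lt_iff₀ (v.pos_iff.2 ha), one_mul]
      rw [div_sub_one ha, map_div₀, div_lt_iff₀ (v.pos_iff.2 ha), one_mul] at hv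
      rwa [← v.map_neg, neg_sub] at hv
  | trans a b c _ _ ih1 ih2 =>
    rcases ih1 with ⟨ha, hb⟩ | ⟨ha, hb, hv1⟩
    · rcases ih2 with ⟨_, hc⟩ | ⟨hb', _, _⟩
      · exact Or.inl ⟨ha, hc⟩
      · exact absurd hb hb'
    · rcases ih2 with ⟨hb', _⟩ | ⟨_, hc, hv2⟩
      · exact absurd hb' hb
      · refine Or.inr ⟨ha, hc, ?_⟩
        have key : c / a - 1 = (c / b - 1) * (b / a) + (b / a - 1) := by
          field_simp
          ring
        rw [key]
        have hvba : v (b / a) = 1 := by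
          have : v (b / a - 1) < 1 := hv1
          have := v.map_one_add_of_lt (x := b / a - 1) this
          simpa using this
        calc v ((c / b - 1) * (b / a) + (b / a - 1))
            ≤ max (v ((c / b - 1) * (b / a))) (v (b / a - 1)) := v.map_add _ _
          _ < 1 := by
              rw [map_mul, hvba, mul_one]
              exact max_lt hv2 hv1

/-- Combining difference quotients (residue characteristic 0 encoded: every nonzero
natural number has valuation 1): if `rv(r₁) = rv(r₂)` with `r₁, r₂ ≠ 0` and
`|s₂/r₂ − s₁/r₁| < λ·|s₁/r₁|` for some `λ ≤ 1` in the value group, then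
`r₁ + r₂ ≠ 0` and `|(s₁+s₂)/(r₁+r₂) − s₁/r₁| < λ·|s₁/r₁|`. -/
theorem difference_quotient_combination (v : Valuation K Γ₀)
    (hres : ∀ n : ℕ, n ≠ 0 → v (n : K) = 1)
    (lam : Γ₀) (hlam0 : lam ≠ 0) (hlam1 : lam ≤ 1)
    (r₁ r₂ s₁ s₂ : K) (hr₁ : r₁ ≠ 0) (hr₂ : r₂ ≠ 0)
    (hrv : rv v 1 r₁ = rv v 1 r₂)
    (hq : v (s₂ / r₂ - s₁ / r₁) < lam * v (s₁ / r₁)) :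
    r₁ + r₂ ≠ 0 ∧ v ((s₁ + s₂) / (r₁ + r₂) - s₁ / r₁) < lam * v (s₁ / r₁) := by
  rcases rv_extract v hrv with ⟨h, _⟩ | ⟨_, _, hv⟩
  · exact absurd h hr₁
  -- v(r₂/r₁) = 1
  have hvr : v (r₂ / r₁) = 1 := by
    have := v.map_one_add_of_lt (x := r₂ / r₁ - 1) hv
    simpa using this
  -- v(1 + r₂/r₁) = 1 using v 2 = 1
  have h2 : v (2 : K) = 1 := by simpa using hres 2 (by norm_num)
  have hsum : v (1 + r₂ / r₁) = 1 := by
    have key : (1 : K) + r₂ / r₁ = 2 + (r₂ / r₁ - 1) := by ring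
    rw [key]
    have := v.map_add_eq_of_lt_left (x := (2:K)) (y := r₂ / r₁ - 1) (by rw [h2]; exact hv)
    rw [this, h2]
  have hne : (1 : K) + r₂ / r₁ ≠ 0 := by
    intro h0; rw [h0] at hsum; simp at hsum
  have hrr : r₁ + r₂ ≠ 0 := by
    intro h0
    apply hne
    field_simp
    linear_combination h0
  refine ⟨hrr, ?_⟩
  have key : (s₁ + s₂) / (r₁ + r₂) - s₁ / r₁ = (s₂ / r₂ - s₁ / r₁) * (r₂ / (r₁ + r₂)) := by
    field_simp
    ring
  have hvq : v (r₂ / (r₁ + r₂)) = 1 := by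
    have h1 : r₁ + r₂ = r₁ * (1 + r₂ / r₁) := by field_simp
    rw [h1, map_div₀, map_mul, hsum, mul_one, ← map_div₀, hvr]
  rw [key, map_mul, hvq, mul_one]
  exact hq
end

section
/- Let K be a valued field, λ ≤ 1 in the value group, ρ ∈ Γ^×, g ∈ K^×, and x₀ ≠ x ∈ K with |x − x₀| < λ·ρ. Suppose f(x), f(x₀) ∈ K satisfy |f(x) − f(x₀) − g·(x − x₀)| ≤ |g|·|x − x₀|²/ρ. Then rv_λ((f(x) − f(x₀))/(x − x₀)) = rv_λ(g). -/
/-!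
Writing `Δ = x - x₀`, the Taylor bound gives `|(f(x) - f(x₀))/Δ - g| ≤ |g|·|Δ|/ρ < λ·|g|`,
which is exactly the condition for two elements to have the same image in `RV_λ`.
-/

variable {K : Type*} [Field K] {Γ₀ : Type*} [LinearOrderedCommGroupWithZero Γ₀]

theorem rv_eq_of_valuation_sub_lt (v : Valuation K Γ₀) {lam : Γ₀} (hlam : lam ≤ 1) {q g : K}
    (h : v (q - g) < lam * v g) : rv v lam q = rv v lam g := by
  have hlt : v (q - g) < v g := h.trans_le (mul_le_of_le_one_left zero_le hlam)
  have hvq : v q = v g := v.map_eq_of_sub_lt hlt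
  have hvg : v g ≠ 0 := (zero_le.trans_lt hlt).ne'
  have hq : q ≠ 0 := v.ne_zero_iff.mp (hvq ▸ hvg)
  refine Quot.sound (Or.inr ⟨g / q, ?_, by field_simp⟩)
  rwa [div_sub_one hq, map_div₀, v.map_sub_swap, hvq, div_lt_iff₀ (zero_lt_iff.mpr hvg)]

theorem rv_jacobian_from_taylor_general (v : Valuation K Γ₀) (lam ρ : Γ₀)
    (hlam1 : lam ≤ 1) (hρ : ρ ≠ 0)
    (g : K) (hg : g ≠ 0) (x x₀ fx fx₀ : K) (hxx : x ≠ x₀)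
    (hclose : v (x - x₀) < lam * ρ)
    (htaylor : v (fx - fx₀ - g * (x - x₀)) ≤ v g * (v (x - x₀) * v (x - x₀)) * ρ⁻¹) :
    rv v lam ((fx - fx₀) / (x - x₀)) = rv v lam g := by
  have hΔ : x - x₀ ≠ 0 := sub_ne_zero.mpr hxx
  have hvΔ : 0 < v (x - x₀) := zero_lt_iff.mpr (v.ne_zero_iff.mpr hΔ)
  have hvg : 0 < v g := zero_lt_iff.mpr (v.ne_zero_iff.mpr hg)
  have hratio : v (x - x₀) * ρ⁻¹ < lam := (mul_inv_lt_iff₀ (zero_lt_iff.mpr hρ)).mpr hclose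
  apply rv_eq_of_valuation_sub_lt v hlam1
  rw [div_sub' hΔ, mul_comm (x - x₀) g, map_div₀, div_lt_iff₀ hvΔ]
  calc v (fx - fx₀ - g * (x - x₀))
      ≤ v g * (v (x - x₀) * v (x - x₀)) * ρ⁻¹ := htaylor
    _ = v g * v (x - x₀) * (v (x - x₀) * ρ⁻¹) := by simp only [mul_assoc]
    _ < v g * v (x - x₀) * lam := mul_lt_mul_of_pos_left hratio (mul_pos hvg hvΔ)
    _ = lam * v g * v (x - x₀) := by rw [mul_comm, mul_assoc]

/-- From an order-1 Taylor approximation to the `RV_λ`-Jacobian property: if `λ ≤ 1`,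
`ρ` is in the value group, `g ≠ 0`, `x ≠ x₀` with `|x − x₀| < λ·ρ`, and
`|f(x) − f(x₀) − g·(x − x₀)| ≤ |g|·|x − x₀|²/ρ`, then
`rv_λ((f(x) − f(x₀))/(x − x₀)) = rv_λ(g)`. -/
theorem rv_jacobian_from_taylor (v : Valuation K Γ₀) (lam ρ : Γ₀)
    (hlam0 : lam ≠ 0) (hlam1 : lam ≤ 1) (hρ : ρ ≠ 0)
    (g : K) (hg : g ≠ 0) (x x₀ fx fx₀ : K) (hxx : x ≠ x₀)
    (hclose : v (x - x₀) < lam * ρ)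
    (htaylor : v (fx - fx₀ - g * (x - x₀)) ≤ v g * (v (x - x₀) * v (x - x₀)) * ρ⁻¹) :
    rv v lam ((fx - fx₀) / (x - x₀)) = rv v lam g :=
  rv_jacobian_from_taylor_general v lam ρ hlam1 hρ g hg x x₀ fx fx₀ hxx hclose htaylor
end

section
/- Let K be a valued field, n ≥ 1, and for γ, δ ∈ Γ ∪ {0} write γ <₀ δ for (γ < δ or γ = δ = 0). Let g ∈ K^n (viewed as a row vector), let a, b, c ∈ K^n with ‖a − c‖ ≤ ‖a − b‖, and let f(a), f(b), f(c) ∈ K. If |f(c) − f(a) − g·(c − a)| <₀ ‖g‖·‖c − a‖ and |f(b) − f(c) − g·(b − c)| <₀ ‖g‖·‖b − c‖, then |f(b) − f(a) − g·(b − a)| <₀ ‖g‖·‖a − b‖. (Transitivity of the supremum Jacobian estimate through an intermediate point.) -/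
variable {K : Type*} [Field K] {Γ₀ : Type*} [LinearOrderedCommGroupWithZero Γ₀]

instance : OrderBot Γ₀ := { bot := 0, bot_le := fun _ => zero_le' }

/-- The relation `γ <₀ δ`, meaning `γ < δ` or `γ = δ = 0`. -/
def ltz (γ δ : Γ₀) : Prop := γ < δ ∨ (γ = δ ∧ δ = 0)

/-- Transitivity of the supremum Jacobian estimate through an intermediate point:
with `‖·‖` the maximum norm on `K^n` and `g·v = ∑ gᵢvᵢ`, if `‖a − c‖ ≤ ‖a − b‖`,
`|f(c) − f(a) − g·(c − a)| <₀ ‖g‖·‖c − a‖` and `|f(b) − f(c) − g·(b − c)| <₀ ‖g‖·‖b − c‖`,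
then `|f(b) − f(a) − g·(b − a)| <₀ ‖g‖·‖a − b‖`. -/
theorem sup_jacobian_transitive (v : Valuation K Γ₀) (n : ℕ) (hn : 1 ≤ n)
    (g a b c : Fin n → K) (fa fb fc : K)
    (hac : (Finset.univ.sup fun i => v (a i - c i)) ≤ Finset.univ.sup fun i => v (a i - b i))
    (h1 : ltz (v (fc - fa - ∑ i, g i * (c i - a i)))
      ((Finset.univ.sup fun i => v (g i)) * Finset.univ.sup fun i => v (c i - a i)))
    (h2 : ltz (v (fb - fc - ∑ i, g i * (b i - c i)))
      ((Finset.univ.sup fun i => v (g i)) * Finset.univ.sup fun i => v (b i - c i))) :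
    ltz (v (fb - fa - ∑ i, g i * (b i - a i)))
      ((Finset.univ.sup fun i => v (g i)) * Finset.univ.sup fun i => v (a i - b i)) := by
  set G := Finset.univ.sup fun i => v (g i) with hG
  set Sab := Finset.univ.sup fun i => v (a i - b i) with hSab
  have key : fb - fa - ∑ i, g i * (b i - a i) =
      (fc - fa - ∑ i, g i * (c i - a i)) + (fb - fc - ∑ i, g i * (b i - c i)) := by
    have hs : ∑ i, g i * (b i - a i) =
        ∑ i, (g i * (c i - a i) + g i * (b i - c i)) := by
      apply Finset.sum_congr rfl; intros; ring
    rw [hs, Finset.sum_add_distrib]; ring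
  have hca : (Finset.univ.sup fun i => v (c i - a i)) ≤ Sab := by
    refine Finset.sup_le fun i _ => ?_
    rw [v.map_sub_swap]
    exact le_trans (Finset.le_sup (f := fun i => v (a i - c i)) (Finset.mem_univ i)) hac
  have hbc : (Finset.univ.sup fun i => v (b i - c i)) ≤ Sab := by
    refine Finset.sup_le fun i _ => ?_
    have : b i - c i = (b i - a i) + (a i - c i) := by ring
    rw [this]
    refine le_trans (v.map_add _ _) (max_le ?_ ?_)
    · rw [v.map_sub_swap]
      exact Finset.le_sup (f := fun i => v (a i - b i)) (Finset.mem_univ i)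
    · exact le_trans (Finset.le_sup (f := fun i => v (a i - c i)) (Finset.mem_univ i)) hac
  have hP1 : G * (Finset.univ.sup fun i => v (c i - a i)) ≤ G * Sab :=
    mul_le_mul_right hca G
  have hP2 : G * (Finset.univ.sup fun i => v (b i - c i)) ≤ G * Sab :=
    mul_le_mul_right hbc G
  rw [key]
  rcases eq_or_ne (G * Sab) 0 with h0 | h0
  · rw [h0] at hP1 hP2
    have e1 : v (fc - fa - ∑ i, g i * (c i - a i)) = 0 := by
      rcases h1 with h | ⟨h, _⟩
      · exact absurd (lt_of_lt_of_le h hP1) (by simp)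
      · exact h.trans (le_antisymm hP1 zero_le')
    have e2 : v (fb - fc - ∑ i, g i * (b i - c i)) = 0 := by
      rcases h2 with h | ⟨h, _⟩
      · exact absurd (lt_of_lt_of_le h hP2) (by simp)
      · exact h.trans (le_antisymm hP2 zero_le')
    right
    refine ⟨?_, h0⟩
    rw [h0]
    exact le_antisymm (le_trans (v.map_add _ _) (by rw [e1, e2]; simp)) zero_le'
  · have hpos : (0 : Γ₀) < G * Sab := zero_lt_iff.mpr h0
    have l1 : v (fc - fa - ∑ i, g i * (c i - a i)) < G * Sab := by
      rcases h1 with h | ⟨h, h'⟩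
      · exact lt_of_lt_of_le h hP1
      · rw [h, h']; exact hpos
    have l2 : v (fb - fc - ∑ i, g i * (b i - c i)) < G * Sab := by
      rcases h2 with h | ⟨h, h'⟩
      · exact lt_of_lt_of_le h hP2
      · rw [h, h']; exact hpos
    exact Or.inl (lt_of_le_of_lt (v.map_add _ _) (max_lt l1 l2))
end

section
/- Let K be a valued field, let B be an open ball of radius β (i.e., B = {y : |y − x₀| < β}), let α ≤ β and r be elements of the value group, and let f : B → K be an injective map such that for every x ∈ B, the image f({y : |y − x| < α}) is an open ball of radius r. Then f(B) ⊇ some open ball, and for every open ball B'' ⊆ f(B) of radius r, the preimage f^{-1}(B'') is an open ball of radius α; more precisely, f^{-1}(B'') = {y : |y − x| < α} for any x ∈ f^{-1}(B''). -/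
/-! By the ultrametric inequality two open balls of the same radius that meet are equal. Hence an
open ball `B''` of radius `r` containing `f x` is the image `f {y | |y - x| < α}`, and injectivity
of `f` on `B` identifies `B ∩ f⁻¹(B'')` with `{y | |y - x| < α}`. -/

variable {K : Type*} [Field K] {Γ₀ : Type*} [LinearOrderedCommGroupWithZero Γ₀]

namespace Valuation

variable {R Γ : Type*} [Ring R] [LinearOrderedCommMonoidWithZero Γ] (v : Valuation R Γ)

def openBall (x : R) (γ : Γ) : Set R := {y | v (y - x) < γ}

variable {v} {x y : R} {γ δ : Γ}

theorem mem_openBall_self (hγ : γ ≠ 0) : x ∈ v.openBall x γ := by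
  simpa [openBall, zero_lt_iff] using hγ

theorem openBall_mono (h : γ ≤ δ) : v.openBall x γ ⊆ v.openBall x δ :=
  fun _ hy => lt_of_lt_of_le hy h

theorem sub_lt_of_sub_lt_of_sub_lt {a b c : R} (hab : v (a - b) < γ) (hbc : v (b - c) < γ) :
    v (a - c) < γ := by
  simpa using v.map_add_lt hab hbc

theorem openBall_eq_of_mem (hy : y ∈ v.openBall x γ) : v.openBall y γ = v.openBall x γ := by
  have hx : x ∈ v.openBall y γ := by
    simpa only [openBall, Set.mem_ofPred, map_sub_swap] using hy
  ext w
  exact ⟨fun hw => sub_lt_of_sub_lt_of_sub_lt hw hy, fun hw => sub_lt_of_sub_lt_of_sub_lt hw hx⟩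

theorem openBall_eq_of_mem_of_mem {w : R} (hx : w ∈ v.openBall x γ) (hy : w ∈ v.openBall y γ) :
    v.openBall x γ = v.openBall y γ := by
  rw [← openBall_eq_of_mem hx, openBall_eq_of_mem hy]

theorem openBall_subset_of_mem_of_le (hy : y ∈ v.openBall x δ) (h : γ ≤ δ) :
    v.openBall y γ ⊆ v.openBall x δ :=
  (openBall_mono h).trans (openBall_eq_of_mem hy).le

end Valuation

open Valuation in
theorem preimage_of_small_ball_general (v : Valuation K Γ₀) (α β r : Γ₀)
    (hα : α ≠ 0) (hαβ : α ≤ β)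
    (x₀ : K) (f : K → K)
    (hinj : Set.InjOn f {y : K | v (y - x₀) < β})
    (himg : ∀ x : K, v (x - x₀) < β →
      ∃ z : K, f '' {y : K | v (y - x) < α} = {w : K | v (w - z) < r}) :
    (∃ z : K, {w : K | v (w - z) < r} ⊆ f '' {y : K | v (y - x₀) < β}) ∧
    (∀ z : K, {w : K | v (w - z) < r} ⊆ f '' {y : K | v (y - x₀) < β} →
      ∀ x : K, v (x - x₀) < β → v (f x - z) < r →
        {y : K | v (y - x₀) < β} ∩ f ⁻¹' {w : K | v (w - z) < r} =
          {y : K | v (y - x) < α}) := by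
  have hsub : ∀ x ∈ v.openBall x₀ β, v.openBall x α ⊆ v.openBall x₀ β :=
    fun _ hx => openBall_subset_of_mem_of_le hx hαβ
  have hx₀ : x₀ ∈ v.openBall x₀ β := mem_openBall_self ((zero_lt_iff.2 hα).trans_le hαβ).ne'
  refine ⟨?_, fun z _ x hx hfx => ?_⟩
  · obtain ⟨z, hz⟩ := himg x₀ hx₀
    exact ⟨z, hz ▸ Set.image_mono (hsub x₀ hx₀)⟩
  · obtain ⟨z', hz'⟩ := himg x hx
    change f '' v.openBall x α = v.openBall z' r at hz'
    have hfx' : f x ∈ v.openBall z' r := hz' ▸ Set.mem_image_of_mem f (mem_openBall_self hα)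
    change v.openBall x₀ β ∩ f ⁻¹' v.openBall z r = v.openBall x α
    rw [openBall_eq_of_mem_of_mem hfx hfx', ← hz', Set.inter_comm]
    exact hinj.preimage_image_inter (hsub x hx)

/-- Let `B` be the open ball of radius `β` around `x₀`, let `α ≤ β` and `r` be in the
value group, and let `f` be injective on `B` and map every open subball of radius `α`
onto an open ball of radius `r`. Then `f(B)` contains an open ball of radius `r`, and
for every open ball `B''` of radius `r` inside `f(B)`, the preimage of `B''` in `B` is
`{y : |y − x| < α}` for any `x ∈ B` with `f(x) ∈ B''`. -/
theorem preimage_of_small_ball (v : Valuation K Γ₀) (α β r : Γ₀)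
    (hα : α ≠ 0) (hβ : β ≠ 0) (hr : r ≠ 0) (hαβ : α ≤ β)
    (x₀ : K) (f : K → K)
    (hinj : Set.InjOn f {y : K | v (y - x₀) < β})
    (himg : ∀ x : K, v (x - x₀) < β →
      ∃ z : K, f '' {y : K | v (y - x) < α} = {w : K | v (w - z) < r}) :
    (∃ z : K, {w : K | v (w - z) < r} ⊆ f '' {y : K | v (y - x₀) < β}) ∧
    (∀ z : K, {w : K | v (w - z) < r} ⊆ f '' {y : K | v (y - x₀) < β} →
      ∀ x : K, v (x - x₀) < β → v (f x - z) < r →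
        {y : K | v (y - x₀) < β} ∩ f ⁻¹' {w : K | v (w - z) < r} =
          {y : K | v (y - x) < α}) :=
  preimage_of_small_ball_general v α β r hα hαβ x₀ f hinj himg
end

section
/- Let K be a valued field of characteristic 0 with valuation ring O_K. Define O' := {x ∈ K : ∃ m ∈ ℕ, m ≥ 1, |m·x| ≤ 1}. Then O' is a valuation ring of K (a subring such that for every x ∈ K^×, x ∈ O' or x^{-1} ∈ O'), it contains both O_K and the image of ℚ in K, and it is the smallest subring of K with these two properties. -/
variable {K : Type*} [Field K] [CharZero K]
  {Γ₀ : Type*} [LinearOrderedCommGroupWithZero Γ₀]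

/-- The equicharacteristic-zero coarsening ring
`O' = {x ∈ K : ∃ m ≥ 1, |m·x| ≤ 1}`. -/
def Oeqc (v : Valuation K Γ₀) : Set K :=
  {x : K | ∃ m : ℕ, m ≠ 0 ∧ v ((m : K) * x) ≤ 1}

/-! Since `|n| ≤ 1` for every integer `n`, denominators `m` with `|m x| ≤ 1` can be multiplied
together, so `O'` is a ring, and it contains `O_K`, hence is a valuation ring. Conversely
`x = m⁻¹ · (m x)` lies in every ring containing `ℚ` and `O_K`. -/

namespace Valuation

variable {R : Type*} [Ring R]

theorem map_natCast_le_one (v : Valuation R Γ₀) (n : ℕ) : v (n : R) ≤ 1 := by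
  induction n with
  | zero => simp
  | succ n ih =>
    rw [Nat.cast_succ]
    exact v.map_add_le ih v.map_one.le

theorem map_intCast_le_one (v : Valuation R Γ₀) (n : ℤ) : v (n : R) ≤ 1 := by
  obtain ⟨n, rfl | rfl⟩ := n.eq_nat_or_neg
  · exact_mod_cast v.map_natCast_le_one n
  · rw [Int.cast_neg, v.map_neg]
    exact_mod_cast v.map_natCast_le_one n

end Valuation

section Field

variable {F : Type*} [Field F] (v : Valuation F Γ₀)

theorem mem_Oeqc_of_le_one {x : F} (hx : v x ≤ 1) : x ∈ Oeqc v :=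
  ⟨1, one_ne_zero, by rwa [Nat.cast_one, one_mul]⟩

theorem neg_mem_Oeqc {x : F} (hx : x ∈ Oeqc v) : -x ∈ Oeqc v := by
  obtain ⟨m, hm, hmx⟩ := hx
  exact ⟨m, hm, by rwa [mul_neg, v.map_neg]⟩

theorem mul_mem_Oeqc {x y : F} (hx : x ∈ Oeqc v) (hy : y ∈ Oeqc v) : x * y ∈ Oeqc v := by
  obtain ⟨m, hm, hmx⟩ := hx
  obtain ⟨n, hn, hny⟩ := hy
  refine ⟨m * n, mul_ne_zero hm hn, ?_⟩
  calc v ((↑(m * n) : F) * (x * y)) = v ((m : F) * x) * v ((n : F) * y) := by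
        rw [← v.map_mul, Nat.cast_mul, mul_mul_mul_comm]
    _ ≤ 1 := mul_le_one' hmx hny

-- Clearing both denominators at once: `mn (x + y) = n (m x) + m (n y)`, and `|n|, |m| ≤ 1`.
theorem add_mem_Oeqc {x y : F} (hx : x ∈ Oeqc v) (hy : y ∈ Oeqc v) : x + y ∈ Oeqc v := by
  obtain ⟨m, hm, hmx⟩ := hx
  obtain ⟨n, hn, hny⟩ := hy
  refine ⟨m * n, mul_ne_zero hm hn, ?_⟩
  have hsplit : (↑(m * n) : F) * (x + y) = n * (m * x) + m * (n * y) := by push_cast; ring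
  rw [hsplit]
  refine v.map_add_le ?_ ?_ <;> rw [v.map_mul] <;>
    exact mul_le_one' (v.map_natCast_le_one _) ‹_›

def eqcValuationSubring : ValuationSubring F where
  carrier := Oeqc v
  zero_mem' := mem_Oeqc_of_le_one v (by simp)
  one_mem' := mem_Oeqc_of_le_one v (by simp)
  add_mem' := add_mem_Oeqc v
  mul_mem' := mul_mem_Oeqc v
  neg_mem' := neg_mem_Oeqc v
  mem_or_inv_mem' x := (v.val_le_one_or_val_inv_le_one x).imp
    (mem_Oeqc_of_le_one v) (mem_Oeqc_of_le_one v)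

end Field

section CharZero

variable (v : Valuation K Γ₀)

theorem ratCast_mem_Oeqc (q : ℚ) : (q : K) ∈ Oeqc v := by
  refine ⟨q.den, q.den_nz, ?_⟩
  have hden : (q.den : K) * q = q.num := by exact_mod_cast q.den_mul_eq_num
  rw [hden]
  exact v.map_intCast_le_one q.num

theorem Oeqc_subset_of_le_one_mem_of_ratCast_mem (S : Subring K)
    (hO : ∀ x : K, v x ≤ 1 → x ∈ S) (hQ : ∀ q : ℚ, (q : K) ∈ S) : Oeqc v ⊆ S := by
  rintro x ⟨m, hm, hmx⟩
  have hx : x = ((m⁻¹ : ℚ) : K) * (m * x) := by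
    push_cast
    rw [inv_mul_cancel_left₀ (Nat.cast_ne_zero.mpr hm)]
  rw [hx]
  exact S.mul_mem (hQ _) (hO _ hmx)

end CharZero

/-- For a valued field `K` of characteristic zero, `O' = {x : ∃ m ≥ 1, |m·x| ≤ 1}`
is a valuation ring of `K` (a subring with `x ∈ O'` or `x⁻¹ ∈ O'` for all `x ≠ 0`),
it contains the valuation ring `O_K` and the image of `ℚ`, and it is the smallest
subring of `K` with these two properties. -/
theorem Oeqc_is_smallest_eqc_valuation_ring (v : Valuation K Γ₀) :
    ((1 : K) ∈ Oeqc v ∧ (∀ x ∈ Oeqc v, ∀ y ∈ Oeqc v, x + y ∈ Oeqc v) ∧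
      (∀ x ∈ Oeqc v, ∀ y ∈ Oeqc v, x * y ∈ Oeqc v) ∧ (∀ x ∈ Oeqc v, -x ∈ Oeqc v)) ∧
    (∀ x : K, x ≠ 0 → x ∈ Oeqc v ∨ x⁻¹ ∈ Oeqc v) ∧
    (∀ x : K, v x ≤ 1 → x ∈ Oeqc v) ∧
    (∀ q : ℚ, (q : K) ∈ Oeqc v) ∧
    (∀ S : Subring K, (∀ x : K, v x ≤ 1 → x ∈ S) → (∀ q : ℚ, (q : K) ∈ S) →
      Oeqc v ⊆ ↑S) := by
  let O' := eqcValuationSubring v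
  exact ⟨⟨O'.one_mem, fun x hx y hy => O'.add_mem x y hx hy,
      fun x hx y hy => O'.mul_mem x y hx hy, fun x hx => O'.neg_mem x hx⟩,
    fun x _ => O'.mem_or_inv_mem x,
    fun _ => mem_Oeqc_of_le_one v,
    ratCast_mem_Oeqc v,
    Oeqc_subset_of_le_one_mem_of_ratCast_mem v⟩
end
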